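/- Let σ ∈ S_n be the inverse of the cycle (1 2 ... n) and for a polynomial p : ℝ^(n×k) → ℝ define ⌈p⌉(X) = (p(X), p(σ·X), p(σ²·X), ..., p(σ^{n−1}·X))ᵀ. If p is invariant under permutations of the last n−1 rows of X, then ⌈p⌉ is a permutation-equivariant map ℝ^(n×k) → ℝ^n. -/

import Mathlib

def permRow {n k : ℕ} (σ : Equiv.Perm (Fin n)) (X : Fin n → Fin k → ℝ) :
    Fin n → Fin k → ℝ := fun i => X (σ⁻¹ i)

noncomputable def evalP {n k : ℕ} (X : Fin n → Fin k → ℝ) (p : MvPolynomial (Fin n × Fin k) ℝ) : ℝ :=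
  MvPolynomial.eval (fun v => X v.1 v.2) p

/-! `⌈p⌉(X)_i = p(ρᵢ⁻¹ · X)` where `ρᵢ = (1 2 … n)^i` sends the first row to row `i`.
Since `p` is invariant under the stabiliser of the first row, `p(ρ⁻¹ · X)` depends only on `ρ 0`.
Both `ρᵢ⁻¹ τ` and `ρ_{τ⁻¹ i}⁻¹` are inverses of permutations sending `0` to `τ⁻¹ i`. -/

open Equiv Fin.CommRing

theorem permRow_mul {n k : ℕ} (σ τ : Perm (Fin n)) (X : Fin n → Fin k → ℝ) :
    permRow σ (permRow τ X) = permRow (σ * τ) X := by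
  funext i
  simp [permRow, mul_inv_rev]

theorem finRotate_pow_apply {n : ℕ} [NeZero n] (j : ℕ) (i : Fin n) :
    (finRotate n ^ j) i = i + (j : Fin n) := by
  induction j with
  | zero => simp
  | succ j ih =>
    rw [pow_succ', Perm.mul_apply, ih, finRotate_apply]
    push_cast
    ring

theorem finRotate_pow_val_apply_zero {n : ℕ} [NeZero n] (i : Fin n) :
    (finRotate n ^ (i : ℕ)) 0 = i := by
  rw [finRotate_pow_apply, zero_add, Fin.cast_val_eq_self]

theorem permRow_inv_congr_of_apply_eq {n k : ℕ} {f : (Fin n → Fin k → ℝ) → ℝ} {a : Fin n}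
    (hf : ∀ σ : Perm (Fin n), σ a = a → ∀ X, f (permRow σ X) = f X)
    {σ τ : Perm (Fin n)} (h : σ a = τ a) (X : Fin n → Fin k → ℝ) :
    f (permRow σ⁻¹ X) = f (permRow τ⁻¹ X) := by
  have hfix : (σ⁻¹ * τ) a = a := by
    rw [Perm.mul_apply, ← h, Perm.coe_inv, symm_apply_apply]
  calc f (permRow σ⁻¹ X)
      = f (permRow (σ⁻¹ * τ) (permRow τ⁻¹ X)) := by rw [permRow_mul, mul_inv_cancel_right]
    _ = f (permRow τ⁻¹ X) := hf _ hfix _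

/-- For `p` invariant under permutations of the last `n-1` rows, the map
`⌈p⌉(X)_i = p(σ^{i} · X)` (with `σ` the inverse of the cycle `(1 2 … n)`) is
permutation equivariant. -/
theorem ceil_p_equivariant (n k : ℕ) [NeZero n]
    (p : MvPolynomial (Fin n × Fin k) ℝ)
    (hinv : ∀ σ : Equiv.Perm (Fin n), σ 0 = 0 → ∀ X : Fin n → Fin k → ℝ,
      evalP (permRow σ X) p = evalP X p)
    (ceilp : (Fin n → Fin k → ℝ) → Fin n → ℝ)
    (hceilp : ceilp = fun X i => evalP (permRow ((finRotate n)⁻¹ ^ i.1) X) p) :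
    ∀ (τ : Equiv.Perm (Fin n)) (X : Fin n → Fin k → ℝ) (i : Fin n),
      ceilp (permRow τ X) i = ceilp X (τ⁻¹ i) := by
  intro τ X i
  subst hceilp
  have hzero : (τ⁻¹ * finRotate n ^ (i : ℕ)) 0 = (finRotate n ^ ((τ⁻¹ i : Fin n) : ℕ)) 0 := by
    rw [Perm.mul_apply, finRotate_pow_val_apply_zero, finRotate_pow_val_apply_zero]
  calc evalP (permRow ((finRotate n)⁻¹ ^ (i : ℕ)) (permRow τ X)) p
      = evalP (permRow (τ⁻¹ * finRotate n ^ (i : ℕ))⁻¹ X) p := by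
        rw [permRow_mul, mul_inv_rev, inv_inv, inv_pow]
    _ = evalP (permRow (finRotate n ^ ((τ⁻¹ i : Fin n) : ℕ))⁻¹ X) p :=
        permRow_inv_congr_of_apply_eq (f := (evalP · p)) hinv hzero X
    _ = evalP (permRow ((finRotate n)⁻¹ ^ ((τ⁻¹ i : Fin n) : ℕ)) X) p := by rw [inv_pow]
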